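/- If a Latin puzzle admits a monotonic full polynomial attrition sequence, then it is fair. Precisely: let D0 : X → Set Λ be a solution-domain (the initial domain) and let S be a finite list of monotonic safe attrition maps such that applying the maps of S in order to D0 yields the singleton domain x ↦ {s x}. Then for every finite list S' of safe attrition maps, applying first the maps of S' and then the maps of S to D0 again yields the singleton domain x ↦ {s x}; in particular, every polynomial attrition sequence is an initial segment of a full polynomial attrition sequence. -/

import Mathlib

/-- A board domain `D` is a *solution-domain* for the solution `s` if `s x ∈ D x` for every
cell `x`. -/
def SolDom {X Λ : Type*} (s : X → Λ) (D : X → Set Λ) : Prop :=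
  ∀ x, s x ∈ D x

/-- A map `T` on board domains is a *safe attrition map* for `s` if it maps every
solution-domain to a smaller (pointwise `⊆`) solution-domain. -/
def SafeAttr {X Λ : Type*} (s : X → Λ) (T : (X → Set Λ) → (X → Set Λ)) : Prop :=
  ∀ D : X → Set Λ, SolDom s D → (∀ x, T D x ⊆ D x) ∧ SolDom s (T D)

/-- A safe attrition map is *monotonic* if `T D' ≤ T D` whenever `D' ≤ D` are
solution-domains. -/
def MonoAttr {X Λ : Type*} (s : X → Λ) (T : (X → Set Λ) → (X → Set Λ)) : Prop :=
  ∀ D D' : X → Set Λ, SolDom s D → SolDom s D' → (∀ x, D' x ⊆ D x) →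
    ∀ x, T D' x ⊆ T D x

/-- Apply a finite list of attrition maps in order to a board domain. -/
def applySeq {X Λ : Type*} (S : List ((X → Set Λ) → (X → Set Λ))) (D : X → Set Λ) :
    X → Set Λ :=
  S.foldl (fun D T => T D) D

/-! Safe maps only shrink domains, so `applySeq S' D0 ≤ D0`. Monotonicity of the maps in `S`
carries this inclusion through to `applySeq S (applySeq S' D0) ≤ applySeq S D0 = {s ·}`, and
since every safe map keeps the solution, the result still contains `s x` in each cell. -/

section AttritionSequence

variable {X Λ : Type*} {s : X → Λ}

lemma solDom_applySeq {S : List ((X → Set Λ) → (X → Set Λ))} (hS : ∀ T ∈ S, SafeAttr s T)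
    {D : X → Set Λ} (hD : SolDom s D) : SolDom s (applySeq S D) := by
  induction S generalizing D with
  | nil => exact hD
  | cons T S ih =>
    exact ih (fun T' hT' => hS T' (List.mem_cons_of_mem _ hT'))
      (hS T List.mem_cons_self D hD).2

lemma applySeq_subset {S : List ((X → Set Λ) → (X → Set Λ))} (hS : ∀ T ∈ S, SafeAttr s T)
    {D : X → Set Λ} (hD : SolDom s D) (x : X) : applySeq S D x ⊆ D x := by
  induction S generalizing D with
  | nil => exact subset_rfl
  | cons T S ih =>
    obtain ⟨hTD, hTsol⟩ := hS T List.mem_cons_self D hD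
    exact (ih (fun T' hT' => hS T' (List.mem_cons_of_mem _ hT')) hTsol).trans (hTD x)

lemma applySeq_subset_applySeq {S : List ((X → Set Λ) → (X → Set Λ))}
    (hS : ∀ T ∈ S, SafeAttr s T ∧ MonoAttr s T) {D D' : X → Set Λ}
    (hD : SolDom s D) (hD' : SolDom s D') (hle : ∀ x, D' x ⊆ D x) (x : X) :
    applySeq S D' x ⊆ applySeq S D x := by
  induction S generalizing D D' with
  | nil => exact hle x
  | cons T S ih =>
    obtain ⟨hTsafe, hTmono⟩ := hS T List.mem_cons_self
    exact ih (fun T' hT' => hS T' (List.mem_cons_of_mem _ hT'))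
      (hTsafe D hD).2 (hTsafe D' hD').2 (hTmono D D' hD hD' hle)

lemma SolDom.eq_singleton {D : X → Set Λ} (hD : SolDom s D) (hle : ∀ x, D x ⊆ {s x}) :
    D = fun x => {s x} :=
  funext fun x => (hle x).antisymm (Set.singleton_subset_iff.2 (hD x))

end AttritionSequence

/-- **A Latin puzzle is fair if it admits a monotonic full polynomial attrition sequence.**
If `S` is a list of monotonic safe attrition maps whose composite takes the initial
solution-domain `D0` to the singleton domain `x ↦ {s x}`, then for any list `S'` of safe
attrition maps, applying `S'` first and then `S` to `D0` again yields the singleton domain. -/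
theorem fair_of_monotonic_full_attrition {X Λ : Type*} (s : X → Λ)
    (D0 : X → Set Λ) (hD0 : SolDom s D0)
    (S : List ((X → Set Λ) → (X → Set Λ)))
    (hS : ∀ T ∈ S, SafeAttr s T ∧ MonoAttr s T)
    (hFull : applySeq S D0 = fun x => {s x}) :
    ∀ S' : List ((X → Set Λ) → (X → Set Λ)),
      (∀ T ∈ S', SafeAttr s T) →
      applySeq S (applySeq S' D0) = fun x => {s x} := by
  intro S' hS'
  have hD' : SolDom s (applySeq S' D0) := solDom_applySeq hS' hD0
  refine SolDom.eq_singleton (solDom_applySeq (fun T hT => (hS T hT).1) hD') fun x => ?_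
  rw [← congrFun hFull x]
  exact applySeq_subset_applySeq hS hD0 hD' (applySeq_subset hS' hD0) x
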